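/- arXiv:2506.19165 — 3 statements merged into one kernel-verified Lean document; each statement's English description precedes it below -/
import Mathlib

section
/- If A is a k-th order symmetric tensor on R^n and U is an orthogonal n×n matrix, then the tensor A ×_1 U ×_2 U ×_3 ... ×_k U has exactly the same Z-eigenvalues as A; in fact if (λ, x) is a Z-eigenpair of A then (λ, U x) is a Z-eigenpair of A ×_1 U ... ×_k U. -/
open Finset Matrix

/-- For a `(k+1)`-th order cubical tensor `A` on `ℝ^n`, the contraction
`A ×₁ x ×₂ x ⋯ ×ₖ x ∈ ℝ^n` along the first `k` modes. -/
def tvp {n k : ℕ} (A : (Fin (k + 1) → Fin n) → ℝ) (x : Fin n → ℝ) : Fin n → ℝ :=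
  fun i => ∑ j : Fin k → Fin n, A (Fin.snoc j i) * ∏ p, x (j p)

/-- `(lam, x)` is a Z-eigenpair of the tensor `A`. -/
def IsZEigenpair {n k : ℕ} (A : (Fin (k + 1) → Fin n) → ℝ) (lam : ℝ) (x : Fin n → ℝ) : Prop :=
  (∑ i, x i ^ 2 = 1) ∧ ∀ i, tvp A x i = lam * x i

/-- The Tucker product `A ×₁ U ×₂ U ⋯ ×_{k+1} U`. -/
def tuckerAll {n k : ℕ} (A : (Fin (k + 1) → Fin n) → ℝ) (U : Matrix (Fin n) (Fin n) ℝ) :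
    (Fin (k + 1) → Fin n) → ℝ :=
  fun i => ∑ j : Fin (k + 1) → Fin n, A j * ∏ p, U (i p) (j p)

lemma UtUv {n : ℕ} (U : Matrix (Fin n) (Fin n) ℝ) (hU : Uᵀ * U = 1) (x : Fin n → ℝ) :
    Uᵀ.mulVec (U.mulVec x) = x := by
  rw [Matrix.mulVec_mulVec, hU, Matrix.one_mulVec]

lemma tvp_tucker {n k : ℕ} (A : (Fin (k + 1) → Fin n) → ℝ)
    (U : Matrix (Fin n) (Fin n) ℝ) (hU : Uᵀ * U = 1) (x : Fin n → ℝ) :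
    tvp (tuckerAll A U) (U.mulVec x) = U.mulVec (tvp A x) := by
  funext i
  have key : ∀ a : Fin n, ∑ q, U q a * U.mulVec x q = x a := by
    intro a
    have := congrFun (UtUv U hU x) a
    simpa [Matrix.mulVec, dotProduct, Matrix.transpose] using this
  calc tvp (tuckerAll A U) (U.mulVec x) i
      = ∑ j : Fin k → Fin n, ∑ m : Fin (k+1) → Fin n,
          A m * ((∏ p : Fin k, (U (j p) (m p.castSucc) * U.mulVec x (j p))) * U i (m (Fin.last k))) := by
        simp only [tvp, tuckerAll, Finset.sum_mul]
        refine Finset.sum_congr rfl fun j _ => Finset.sum_congr rfl fun m _ => ?_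
        rw [Fin.prod_univ_castSucc]
        simp only [Fin.snoc_castSucc, Fin.snoc_last, Finset.prod_mul_distrib]
        ring
    _ = ∑ m : Fin (k+1) → Fin n,
          A m * ((∏ p : Fin k, x (m p.castSucc)) * U i (m (Fin.last k))) := by
        rw [Finset.sum_comm]
        refine Finset.sum_congr rfl fun m _ => ?_
        rw [← Finset.mul_sum, ← Finset.sum_mul,
          ← Fintype.prod_sum (f := fun (p : Fin k) (q : Fin n) => U q (m p.castSucc) * U.mulVec x q)]
        simp [key]
    _ = U.mulVec (tvp A x) i := by
        rw [← (Fin.snocEquiv (fun _ : Fin (k+1) => Fin n)).sum_comp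
          (fun m => A m * ((∏ p : Fin k, x (m p.castSucc)) * U i (m (Fin.last k))))]
        rw [Fintype.sum_prod_type]
        simp only [Fin.snocEquiv, Equiv.coe_fn_mk, Fin.snoc_castSucc, Fin.snoc_last,
          Matrix.mulVec, dotProduct, tvp]
        refine Finset.sum_congr rfl fun l _ => ?_
        simp only [Finset.mul_sum]
        exact Finset.sum_congr rfl fun j _ => by ring

lemma norm_pres {n : ℕ} (U : Matrix (Fin n) (Fin n) ℝ) (hU : Uᵀ * U = 1) (x : Fin n → ℝ) :
    ∑ i, U.mulVec x i ^ 2 = ∑ i, x i ^ 2 := by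
  have h1 : U.mulVec x ⬝ᵥ U.mulVec x = x ⬝ᵥ x := by
    rw [Matrix.dotProduct_mulVec, ← Matrix.mulVec_transpose, UtUv U hU]
  simpa [dotProduct, pow_two] using h1

lemma fwd {n k : ℕ} (A : (Fin (k + 1) → Fin n) → ℝ)
    (U : Matrix (Fin n) (Fin n) ℝ) (hU : Uᵀ * U = 1) (lam : ℝ) (x : Fin n → ℝ)
    (h : IsZEigenpair A lam x) : IsZEigenpair (tuckerAll A U) lam (U.mulVec x) := by
  obtain ⟨hn, he⟩ := h
  refine ⟨by rw [norm_pres U hU]; exact hn, fun i => ?_⟩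
  rw [tvp_tucker A U hU x]
  have : tvp A x = fun i => lam * x i := funext he
  rw [this]
  simp only [Matrix.mulVec, dotProduct, Finset.mul_sum]
  exact Finset.sum_congr rfl fun q _ => by ring

lemma tucker_tucker {n k : ℕ} (A : (Fin (k + 1) → Fin n) → ℝ)
    (U : Matrix (Fin n) (Fin n) ℝ) (hU : Uᵀ * U = 1) :
    tuckerAll (tuckerAll A U) Uᵀ = A := by
  funext i
  simp only [tuckerAll, Finset.sum_mul]
  rw [Finset.sum_comm]
  calc ∑ m : Fin (k+1) → Fin n, ∑ j : Fin (k+1) → Fin n,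
        (A m * ∏ p, U (j p) (m p)) * ∏ p, Uᵀ (i p) (j p)
      = ∑ m : Fin (k+1) → Fin n, A m * ∏ p, (∑ q, U q (m p) * U q (i p)) := by
        refine Finset.sum_congr rfl fun m _ => ?_
        simp only [mul_assoc]
        rw [← Finset.mul_sum]
        congr 1
        rw [Fintype.prod_sum (f := fun (p : Fin (k+1)) (q : Fin n) => U q (m p) * U q (i p))]
        refine Finset.sum_congr rfl fun j _ => ?_
        rw [← Finset.prod_mul_distrib]
        simp [Matrix.transpose_apply]
    _ = ∑ m : Fin (k+1) → Fin n, A m * ∏ p, (if m p = i p then (1:ℝ) else 0) := by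
        refine Finset.sum_congr rfl fun m _ => ?_
        congr 1
        refine Finset.prod_congr rfl fun p _ => ?_
        have := congrFun (congrFun hU (m p)) (i p)
        simpa [Matrix.mul_apply, Matrix.one_apply, Matrix.transpose_apply] using this
    _ = A i := by
        simp only [Finset.prod_boole]
        rw [Finset.sum_eq_single i] <;> simp +contextual [funext_iff]

/-- If `A` is a `(k+1)`-th order symmetric tensor on `ℝ^n` and `U` is orthogonal, then
`A ×₁ U ⋯ ×_{k+1} U` has exactly the same Z-eigenvalues as `A`; in fact if `(lam, x)` is a
Z-eigenpair of `A` then `(lam, U x)` is a Z-eigenpair of `A ×₁ U ⋯ ×_{k+1} U`. -/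
theorem zeigenvalues_invariant_orthogonal {n k : ℕ}
    (A : (Fin (k + 1) → Fin n) → ℝ)
    (hsym : ∀ σ : Equiv.Perm (Fin (k + 1)), ∀ j, A (j ∘ σ) = A j)
    (U : Matrix (Fin n) (Fin n) ℝ) (hU : Uᵀ * U = 1) :
    (∀ lam x, IsZEigenpair A lam x → IsZEigenpair (tuckerAll A U) lam (U.mulVec x)) ∧
    (∀ lam : ℝ, (∃ x, IsZEigenpair A lam x) ↔ ∃ y, IsZEigenpair (tuckerAll A U) lam y) := by
  have hUU : Uᵀᵀ * Uᵀ = 1 := by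
    rw [Matrix.transpose_transpose]
    exact mul_eq_one_comm.mp hU
  refine ⟨fun lam x h => fwd A U hU lam x h, fun lam => ⟨?_, ?_⟩⟩
  · rintro ⟨x, h⟩
    exact ⟨U.mulVec x, fwd A U hU lam x h⟩
  · rintro ⟨y, h⟩
    refine ⟨Uᵀ.mulVec y, ?_⟩
    have := fwd (tuckerAll A U) Uᵀ hUU lam y h
    rwa [tucker_tucker A U hU] at this
end

section
/- Let A = Σ_{j=1}^n λ_j u_j^{∘k} be odeco with orthonormal basis u_j and all nonzero Z-eigenvalues among λ_1,...,λ_r (λ_j = 0 for j > r), and suppose k is even. If for an initial condition x_0 = Σ_j α_j u_j the original system ẋ = A x^{k-1} satisfies λ_j α_j^{k-2} ≤ 0 for all j (stability condition), then the reduced system ż = A_red z^{k-1} with initial condition z_0 = V^T x_0 satisfies λ_j (z_0)_j^{k-2} < 0 for all j ≤ r with (z_0)_j ≠ 0, hence every nonzero coordinate of z(t) decays monotonically in absolute value to 0. -/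
/-!
Since `k` is odd, `α_j ^ (k - 1) > 0` whenever `α_j ≠ 0`, so the stability condition and
`λ_j ≠ 0` force `λ_j < 0`. For the decoupled equation `z' = λ z ^ k`, read as the linear equation
`z' = (λ z ^ (k - 1)) z`, one gets `z t = z 0 * exp (∫₀ᵗ λ z ^ (k - 1))`, so `z` never vanishes.
Hence `(z ^ 2)' = 2 λ z ^ (k + 1) < 0` because `k + 1` is even, and `|z|` strictly decreases.
If `z ^ 2` stayed above some `L > 0`, its derivative would stay below `2 λ L ^ ((k + 1) / 2) < 0`,
which is impossible for a nonnegative function; so `z → 0`.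
-/

open Filter Topology Real

theorem neg_of_mul_pow_nonpos {R : Type*} [Ring R] [LinearOrder R] [IsStrictOrderedRing R]
    {l x : R} {m : ℕ} (hm : Even m) (hl : l ≠ 0) (hx : x ≠ 0) (h : l * x ^ m ≤ 0) : l < 0 :=
  (nonpos_of_mul_nonpos_left h (hm.pow_pos hx)).lt_of_ne hl

theorem eq_mul_exp_integral_of_hasDerivAt_mul {f a : ℝ → ℝ} (ha : Continuous a)
    (hf : ∀ t, HasDerivAt f (a t * f t) t) (t : ℝ) :
    f t = f 0 * exp (∫ s in (0)..t, a s) := by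
  set A : ℝ → ℝ := fun u => ∫ s in (0)..u, a s
  have hA : ∀ t, HasDerivAt (fun u => f u * exp (-A u)) 0 t := fun t => by
    refine ((hf t).fun_mul (ha.integral_hasStrictDerivAt 0 t).hasDerivAt.fun_neg.exp).congr_deriv ?_
    ring
  have hconst := is_const_of_deriv_eq_zero (fun t => (hA t).differentiableAt)
    (fun t => (hA t).deriv) t 0
  simp only [A, intervalIntegral.integral_same, neg_zero, exp_zero, mul_one] at hconst
  rw [← hconst, mul_assoc, ← exp_add, neg_add_cancel, exp_zero, mul_one]

theorem antitone_add_mul_of_hasDerivAt_le {y y' : ℝ → ℝ} {c : ℝ}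
    (hy : ∀ t, HasDerivAt y (y' t) t) (hc : ∀ t, y' t ≤ -c) :
    Antitone fun t => y t + c * t := by
  have hd : ∀ t, HasDerivAt (fun t => y t + c * t) (y' t + c) t := fun t => by
    simpa using (hy t).fun_add ((hasDerivAt_id t).const_mul c)
  exact antitone_of_deriv_nonpos (fun t => (hd t).differentiableAt)
    fun t => by rw [(hd t).deriv]; linarith [hc t]

section PowerODE

variable {z : ℝ → ℝ} {l : ℝ} {k : ℕ}

theorem ne_zero_of_hasDerivAt_mul_pow (hk : 1 ≤ k) (hz : ∀ t, HasDerivAt z (l * z t ^ k) t)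
    (h0 : z 0 ≠ 0) (t : ℝ) : z t ≠ 0 := by
  have hcont : Continuous z := continuous_iff_continuousAt.2 fun t => (hz t).continuousAt
  have hlin : ∀ t, HasDerivAt z ((l * z t ^ (k - 1)) * z t) t := fun t => by
    rw [mul_assoc, ← pow_succ, Nat.sub_add_cancel hk]
    exact hz t
  rw [eq_mul_exp_integral_of_hasDerivAt_mul (by fun_prop) hlin t]
  exact mul_ne_zero h0 (exp_pos _).ne'

theorem hasDerivAt_sq_of_hasDerivAt_mul_pow (hz : ∀ t, HasDerivAt z (l * z t ^ k) t) (t : ℝ) :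
    HasDerivAt (fun t => z t ^ 2) (2 * l * z t ^ (k + 1)) t := by
  refine ((hz t).fun_pow 2).congr_deriv ?_
  ring

theorem strictAnti_sq_of_hasDerivAt_mul_pow (hk : Odd k) (hl : l < 0)
    (hz : ∀ t, HasDerivAt z (l * z t ^ k) t) (h0 : z 0 ≠ 0) :
    StrictAnti fun t => z t ^ 2 := by
  have hk1 : Even (k + 1) := Nat.even_add_one.2 (Nat.not_even_iff_odd.2 hk)
  refine strictAnti_of_deriv_neg fun t => ?_
  rw [(hasDerivAt_sq_of_hasDerivAt_mul_pow hz t).deriv]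
  exact mul_neg_of_neg_of_pos (by linarith)
    (hk1.pow_pos (ne_zero_of_hasDerivAt_mul_pow hk.pos hz h0 t))

theorem strictAnti_abs_of_hasDerivAt_mul_pow (hk : Odd k) (hl : l < 0)
    (hz : ∀ t, HasDerivAt z (l * z t ^ k) t) (h0 : z 0 ≠ 0) :
    StrictAnti fun t => |z t| :=
  fun _ _ hst => sq_lt_sq.1 (strictAnti_sq_of_hasDerivAt_mul_pow hk hl hz h0 hst)

theorem tendsto_zero_of_hasDerivAt_mul_pow (hk : Odd k) (hl : l < 0)
    (hz : ∀ t, HasDerivAt z (l * z t ^ k) t) (h0 : z 0 ≠ 0) :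
    Tendsto z atTop (𝓝 0) := by
  set y : ℝ → ℝ := fun t => z t ^ 2
  have hbdd : BddBelow (Set.range y) := ⟨0, by rintro _ ⟨t, rfl⟩; positivity⟩
  have hlim := tendsto_atTop_ciInf (strictAnti_sq_of_hasDerivAt_mul_pow hk hl hz h0).antitone hbdd
  have hinf : ⨅ t, y t = 0 := by
    set L := ⨅ t, y t
    have hLy : ∀ t, L ≤ y t := ciInf_le hbdd
    by_contra hL
    have hLpos : 0 < L := (le_ciInf fun t => sq_nonneg (z t)).lt_of_ne' hL
    obtain ⟨m, rfl⟩ := hk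
    set c := -(2 * l * L ^ (m + 1))
    have hc : 0 < c := by have := pow_pos hLpos (m + 1); nlinarith
    have hderiv : ∀ t, 2 * l * z t ^ (2 * m + 1 + 1) ≤ -c := fun t => by
      have hpow : L ^ (m + 1) ≤ z t ^ (2 * m + 1 + 1) := by
        rw [show 2 * m + 1 + 1 = 2 * (m + 1) by ring, pow_mul]
        exact pow_le_pow_left₀ hLpos.le (hLy t) _
      nlinarith
    -- `y t + c t` is antitone, so `y` would be negative at `t = y 0 / c + 1`
    have hdecay := antitone_add_mul_of_hasDerivAt_le (hasDerivAt_sq_of_hasDerivAt_mul_pow hz) hderiv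
      (show 0 ≤ y 0 / c + 1 by positivity)
    have hy : 0 ≤ y (y 0 / c + 1) := sq_nonneg _
    simp only [mul_zero, add_zero, mul_add, mul_div_cancel₀ _ hc.ne', mul_one] at hdecay
    linarith
  rw [hinf] at hlim
  rw [tendsto_zero_iff_abs_tendsto_zero]
  simpa [Function.comp_def, y, sqrt_sq_eq_abs] using hlim.sqrt

end PowerODE

theorem reduced_stability_general {n r k : ℕ} (hr : r ≤ n)
    (hkeven : Even (k + 1)) (lam : Fin n → ℝ)
    (hnonzero : ∀ b : Fin r, lam (Fin.castLE hr b) ≠ 0)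
    (α : Fin n → ℝ)
    (hstab : ∀ a : Fin n, lam a * α a ^ (k - 1) ≤ 0) :
    (∀ b : Fin r, α (Fin.castLE hr b) ≠ 0 →
      lam (Fin.castLE hr b) * α (Fin.castLE hr b) ^ (k - 1) < 0) ∧
    (∀ z : ℝ → Fin r → ℝ,
      (∀ t b, HasDerivAt (fun s => z s b) (lam (Fin.castLE hr b) * z t b ^ k) t) →
      (∀ b, z 0 b = α (Fin.castLE hr b)) →
      ∀ b : Fin r, α (Fin.castLE hr b) ≠ 0 →
        StrictAntiOn (fun t => |z t b|) (Set.Ici (0 : ℝ)) ∧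
        Filter.Tendsto (fun t => z t b) Filter.atTop (nhds 0)) := by
  have hk : Odd k := Nat.not_even_iff_odd.1 (Nat.even_add_one.1 hkeven)
  have hk1 : Even (k - 1) := Nat.Odd.sub_odd hk odd_one
  have hneg : ∀ b : Fin r, α (Fin.castLE hr b) ≠ 0 → lam (Fin.castLE hr b) < 0 :=
    fun b hb => neg_of_mul_pow_nonpos hk1 (hnonzero b) hb (hstab _)
  refine ⟨fun b hb => mul_neg_of_neg_of_pos (hneg b hb) (hk1.pow_pos hb), ?_⟩
  intro z hz hz0 b hb
  have h0 : z 0 b ≠ 0 := hz0 b ▸ hb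
  exact ⟨(strictAnti_abs_of_hasDerivAt_mul_pow hk (hneg b hb) (hz · b) h0).strictAntiOn _,
    tendsto_zero_of_hasDerivAt_mul_pow hk (hneg b hb) (hz · b) h0⟩

/-- Let `A = ∑_j lam j • u_j^{∘(k+1)}` be odeco (order `k+1` even) with all nonzero
Z-eigenvalues among `lam 1, …, lam r` (`lam j = 0` for `j > r`).  If the initial
condition `x₀ = ∑_j α_j u_j` of `ẋ = A x^k` satisfies the stability condition
`lam j * α_j^{k-1} ≤ 0` for all `j`, then the reduced initial condition `z₀ = Vᵀ x₀`
(with coordinates `α_j`, `j ≤ r`) satisfies `lam j * (z₀)_j^{k-1} < 0` for every `j ≤ r`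
with `(z₀)_j ≠ 0`; hence every nonzero coordinate of the solution `z(t)` of the
decoupled reduced dynamics `ż_j = lam j * z_j^k` decays monotonically in absolute
value to `0`. -/
theorem reduced_stability {n r k : ℕ} (hr : r ≤ n) (hk : 1 ≤ k)
    (hkeven : Even (k + 1)) (lam : Fin n → ℝ)
    (hzero : ∀ a : Fin n, r ≤ (a : ℕ) → lam a = 0)
    (hnonzero : ∀ b : Fin r, lam (Fin.castLE hr b) ≠ 0)
    (α : Fin n → ℝ)
    (hstab : ∀ a : Fin n, lam a * α a ^ (k - 1) ≤ 0) :
    (∀ b : Fin r, α (Fin.castLE hr b) ≠ 0 →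
      lam (Fin.castLE hr b) * α (Fin.castLE hr b) ^ (k - 1) < 0) ∧
    (∀ z : ℝ → Fin r → ℝ,
      (∀ t b, HasDerivAt (fun s => z s b) (lam (Fin.castLE hr b) * z t b ^ k) t) →
      (∀ b, z 0 b = α (Fin.castLE hr b)) →
      ∀ b : Fin r, α (Fin.castLE hr b) ≠ 0 →
        StrictAntiOn (fun t => |z t b|) (Set.Ici (0 : ℝ)) ∧
        Filter.Tendsto (fun t => z t b) Filter.atTop (nhds 0)) :=
  reduced_stability_general hr hkeven lam hnonzero α hstab
end

section
/- Every k-th order real symmetric tensor A on R^n with n ≥ 1 and k even has at least one Z-eigenpair: there exist λ ∈ R and x ∈ R^n with ‖x‖_2 = 1 and A ×_1 x ×_2 ... ×_{k-1} x = λ x. Moreover, λ can be taken as the maximum of the homogeneous form A x^k = A ×_1 x ... ×_k x over the unit sphere, attained at a maximizer x. -/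
/-!
At a maximizer `x` of the form `A x^(k+1)` on the (compact) unit sphere, Lagrange's rule makes
the gradient of the form a multiple `μ x`. By the product rule that gradient is a sum of `k + 1`
contractions, one for each slot of `A`, and symmetry of `A` makes every one of them equal to
`A x^k`; so `A x^k = (μ / (k + 1)) x`, and pairing with `x` shows that this multiple is the
maximum `A x^(k+1)` itself.
-/

open Finset

/-- The homogeneous form `A x^{k+1} = A ×₁ x ⋯ ×_{k+1} x`. -/
def tform {n k : ℕ} (A : (Fin (k + 1) → Fin n) → ℝ) (x : Fin n → ℝ) : ℝ :=
  ∑ j : Fin (k + 1) → Fin n, A j * ∏ p, x (j p)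

lemma Fin.prod_univ_erase_eq_prod_succAbove {M : Type*} [CommMonoid M] {k : ℕ}
    (f : Fin (k + 1) → M) (p : Fin (k + 1)) :
    ∏ q ∈ univ.erase p, f q = ∏ i : Fin k, f (p.succAbove i) := by
  rw [← compl_singleton, ← Fin.image_succAbove_univ,
    prod_image Fin.succAbove_right_injective.injOn]

section Sphere

lemma isCompact_sum_sq_eq_one (n : ℕ) : IsCompact {y : Fin n → ℝ | ∑ i, y i ^ 2 = 1} := by
  have hS : {y : Fin n → ℝ | ∑ i, y i ^ 2 = 1} =
      (PiLp.homeomorph 2 fun _ : Fin n => ℝ).symm ⁻¹' Metric.sphere 0 1 := by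
    ext y
    simp [EuclideanSpace.norm_eq, PiLp.homeomorph]
  rw [hS, Homeomorph.isCompact_preimage]
  exact isCompact_sphere _ _

variable {n : ℕ}

lemma hasStrictFDerivAt_sum_sq (x : Fin n → ℝ) :
    HasStrictFDerivAt (fun y : Fin n → ℝ => ∑ i, y i ^ 2)
      (∑ i, (2 * x i) • ContinuousLinearMap.proj (R := ℝ) (φ := fun _ : Fin n => ℝ) i) x :=
  (HasStrictFDerivAt.fun_sum (u := univ) fun i _ =>
    (hasStrictFDerivAt_apply i x).pow 2).congr_fderiv (by simp)

theorem exists_eq_mul_of_isMaxOn_sum_sq_eq_one {f : (Fin n → ℝ) → ℝ} {x g : Fin n → ℝ}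
    (hx : ∑ i, x i ^ 2 = 1) (hmax : IsMaxOn f {y | ∑ i, y i ^ 2 = 1} x)
    (hf : HasStrictFDerivAt f
      (∑ i, g i • ContinuousLinearMap.proj (R := ℝ) (φ := fun _ : Fin n => ℝ) i) x) :
    ∃ μ : ℝ, ∀ i, g i = μ * x i := by
  rw [← hx] at hmax
  obtain ⟨a, b, hab, hrel⟩ := hmax.isExtr.localize.exists_multipliers_of_hasStrictFDerivAt_1d
    (hasStrictFDerivAt_sum_sq x) hf
  have happ (v : Fin n → ℝ) : a * ∑ i, 2 * x i * v i + b * ∑ i, g i * v i = 0 := by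
    simpa using congrArg (· v) hrel
  have hb : b ≠ 0 := by
    rintro rfl
    have ha : a = 0 := by
      have hax := happ x
      simp only [zero_mul, add_zero, mul_assoc, ← mul_sum, ← sq, hx] at hax
      linarith
    exact hab (by simp [ha])
  refine ⟨-2 * a / b, fun i => ?_⟩
  have hi := happ (Pi.single i 1)
  simp only [Pi.single_apply, mul_ite, mul_one, mul_zero, sum_ite_eq', mem_univ, ↓reduceIte] at hi
  field_simp
  linarith

end Sphere

section Tensor

variable {n k : ℕ} (A : (Fin (k + 1) → Fin n) → ℝ)

lemma sum_mul_prod_erase_last_mul_eq_sum_tvp_mul (x v : Fin n → ℝ) :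
    ∑ j : Fin (k + 1) → Fin n,
        A j * ((∏ q ∈ univ.erase (Fin.last k), x (j q)) * v (j (Fin.last k)))
      = ∑ i, tvp A x i * v i := by
  rw [← (Fin.snocEquiv fun _ => Fin n).sum_comp, Fintype.sum_prod_type]
  simp [Fin.snocEquiv, Fin.prod_univ_erase_eq_prod_succAbove, tvp, sum_mul, mul_assoc]

lemma tform_eq_sum_tvp_mul (x : Fin n → ℝ) : tform A x = ∑ i, tvp A x i * x i := by
  simp only [← sum_mul_prod_erase_last_mul_eq_sum_tvp_mul, prod_erase_mul _ _ (mem_univ _),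
    tform]

variable {A}

lemma sum_mul_prod_erase_mul_eq_sum_tvp_mul
    (hsym : ∀ σ : Equiv.Perm (Fin (k + 1)), ∀ j, A (j ∘ σ) = A j)
    (x v : Fin n → ℝ) (p : Fin (k + 1)) :
    ∑ j : Fin (k + 1) → Fin n, A j * ((∏ q ∈ univ.erase p, x (j q)) * v (j p))
      = ∑ i, tvp A x i * v i := by
  rw [← sum_mul_prod_erase_last_mul_eq_sum_tvp_mul]
  set σ := Equiv.swap p (Fin.last k)
  refine Fintype.sum_equiv (σ.symm.arrowCongr (Equiv.refl _)) _ _ fun j => ?_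
  have hprod : ∏ q ∈ univ.erase (Fin.last k), x (j (σ q)) = ∏ q ∈ univ.erase p, x (j q) :=
    prod_equiv σ (by simp [σ, Equiv.swap_apply_eq_iff]) fun _ _ => rfl
  change _ = A (j ∘ σ) *
    ((∏ q ∈ univ.erase (Fin.last k), x (j (σ q))) * v (j (σ (Fin.last k))))
  rw [hsym, hprod, Equiv.swap_apply_right]

lemma hasStrictFDerivAt_tform (hsym : ∀ σ : Equiv.Perm (Fin (k + 1)), ∀ j, A (j ∘ σ) = A j)
    (x : Fin n → ℝ) :
    HasStrictFDerivAt (tform A)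
      (∑ i, ((k + 1) * tvp A x i) •
        ContinuousLinearMap.proj (R := ℝ) (φ := fun _ : Fin n => ℝ) i) x := by
  refine (HasStrictFDerivAt.fun_sum (u := univ) fun j _ =>
    (HasStrictFDerivAt.finsetProd (u := univ) fun p _ =>
      hasStrictFDerivAt_apply (j p) x).const_mul (A j)).congr_fderiv
    (ContinuousLinearMap.ext fun v => ?_)
  simp only [_root_.sum_apply, smul_apply, ContinuousLinearMap.proj_apply, smul_eq_mul, mul_sum]
  rw [sum_comm]
  simp [sum_mul_prod_erase_mul_eq_sum_tvp_mul hsym, mul_assoc, ← mul_sum]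

end Tensor

theorem symmetric_tensor_has_zeigenpair_general {n k : ℕ} (hn : 1 ≤ n)
    (A : (Fin (k + 1) → Fin n) → ℝ)
    (hsym : ∀ σ : Equiv.Perm (Fin (k + 1)), ∀ j, A (j ∘ σ) = A j) :
    ∃ lam : ℝ, ∃ x : Fin n → ℝ, (∑ i, x i ^ 2 = 1) ∧
      (∀ i, tvp A x i = lam * x i) ∧
      lam = tform A x ∧
      ∀ y : Fin n → ℝ, (∑ i, y i ^ 2 = 1) → tform A y ≤ lam := by
  have hne : {y : Fin n → ℝ | ∑ i, y i ^ 2 = 1}.Nonempty :=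
    ⟨Pi.single ⟨0, hn⟩ 1, by simp [Pi.single_apply]⟩
  have hcont : Continuous (tform A) := by unfold tform; fun_prop
  obtain ⟨x, hx, hmax⟩ := (isCompact_sum_sq_eq_one n).exists_isMaxOn hne hcont.continuousOn
  obtain ⟨μ, hμ⟩ :=
    exists_eq_mul_of_isMaxOn_sum_sq_eq_one hx hmax (hasStrictFDerivAt_tform hsym x)
  have heig : ∀ i, tvp A x i = μ / (k + 1) * x i := fun i => by
    rw [div_mul_eq_mul_div, eq_div_iff (by positivity), ← hμ, mul_comm]
  have hlam : tform A x = μ / (k + 1) := by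
    simp [tform_eq_sum_tvp_mul, heig, mul_assoc, ← sq, ← mul_sum, hx.out]
  exact ⟨tform A x, x, hx, hlam ▸ heig, rfl, fun y hy => hmax hy⟩

/-- Every real symmetric tensor of even order `k+1` on `ℝ^n`, `n ≥ 1`, has at least one
Z-eigenpair: there are `lam ∈ ℝ` and a unit vector `x` with `A ×₁ x ⋯ ×ₖ x = lam • x`.
Moreover `lam` can be taken as the maximum of the homogeneous form `A x^{k+1}` over the
unit sphere, attained at a maximizer `x`. -/
theorem symmetric_tensor_has_zeigenpair {n k : ℕ} (hn : 1 ≤ n) (hke : Even (k + 1))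
    (A : (Fin (k + 1) → Fin n) → ℝ)
    (hsym : ∀ σ : Equiv.Perm (Fin (k + 1)), ∀ j, A (j ∘ σ) = A j) :
    ∃ lam : ℝ, ∃ x : Fin n → ℝ, (∑ i, x i ^ 2 = 1) ∧
      (∀ i, tvp A x i = lam * x i) ∧
      lam = tform A x ∧
      ∀ y : Fin n → ℝ, (∑ i, y i ^ 2 = 1) → tform A y ≤ lam :=
  symmetric_tensor_has_zeigenpair_general hn A hsym
end
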